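/- arXiv:1705.01512 — 5 statements merged into one kernel-verified Lean document; each statement's English description precedes it below -/
import Mathlib

section
/- If an invertible linear map L : ℝⁿ → ℝⁿ maps some open Euclidean ball of positive radius onto another open Euclidean ball, then L is a conformal linear map, i.e., L = λ • T for some λ > 0 and a linear isometry T. -/
/-!
Since `c ± x` lie in `B(c, r)` whenever `‖x‖ < r`, the difference of their images shows that `L`
maps `B(0, r)` into `B(0, r')`; by scaling, `‖L x‖ ≤ (r'/r) ‖x‖`. The same argument for `L⁻¹` gives
`‖x‖ ≤ (r/r') ‖L x‖`, so `L` multiplies all norms by `r'/r`, and `(r/r') • L` is an isometry.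
-/

open Metric Set

section

variable {E F : Type*} [SeminormedAddCommGroup E] [NormedSpace ℝ E]
  [SeminormedAddCommGroup F] [NormedSpace ℝ F]

namespace LinearMap

-- `2 • f x = (f (c + x) - c') - (f (c - x) - c')`, and both terms lie in `ball 0 r'`.
theorem mapsTo_ball_zero_of_mapsTo_ball (f : E →ₗ[ℝ] F) {c : E} {c' : F} {r r' : ℝ}
    (hf : MapsTo f (ball c r) (ball c' r')) : MapsTo f (ball 0 r) (ball 0 r') := by
  intro x hx
  rw [mem_ball_zero_iff] at hx ⊢
  have hplus : ‖f (c + x) - c'‖ < r' := by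
    simpa [dist_eq_norm] using hf (show c + x ∈ ball c r by simpa [dist_eq_norm] using hx)
  have hminus : ‖f (c - x) - c'‖ < r' := by
    simpa [dist_eq_norm] using hf (show c - x ∈ ball c r by simpa [dist_eq_norm] using hx)
  have hsplit : (2 : ℝ) • f x = (f (c + x) - c') - (f (c - x) - c') := by
    simp only [map_add, map_sub]; module
  have := norm_sub_le (f (c + x) - c') (f (c - x) - c')
  rw [← hsplit, norm_smul, Real.norm_two] at this
  linarith

theorem norm_apply_lt_of_mapsTo_ball_zero (f : E →ₗ[ℝ] F) {r r' t : ℝ} (hr : 0 < r)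
    (hf : MapsTo f (ball 0 r) (ball 0 r')) {x : E} (hxt : ‖x‖ < t) :
    ‖f x‖ < r' / r * t := by
  have ht : 0 < t := (norm_nonneg x).trans_lt hxt
  have hscaled : (r / t) • x ∈ ball 0 r := by
    rw [mem_ball_zero_iff, norm_smul, Real.norm_of_nonneg (by positivity), div_mul_eq_mul_div,
      div_lt_iff₀ ht]
    exact mul_lt_mul_of_pos_left hxt hr
  have := hf hscaled
  rw [mem_ball_zero_iff, map_smul, norm_smul, Real.norm_of_nonneg (by positivity)] at this
  rw [div_mul_eq_mul_div, lt_div_iff₀ hr]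
  rw [div_mul_eq_mul_div, div_lt_iff₀ ht] at this
  linarith

theorem norm_apply_le_of_mapsTo_ball_zero (f : E →ₗ[ℝ] F) {r r' : ℝ} (hr : 0 < r)
    (hf : MapsTo f (ball 0 r) (ball 0 r')) (x : E) : ‖f x‖ ≤ r' / r * ‖x‖ := by
  have hlim : Filter.Tendsto (fun t => r' / r * t) (nhdsWithin ‖x‖ (Ioi ‖x‖))
      (nhds (r' / r * ‖x‖)) :=
    ((continuous_const.mul continuous_id).tendsto _).mono_left nhdsWithin_le_nhds
  exact ge_of_tendsto hlim (eventually_nhdsWithin_of_forall fun t ht =>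
    (f.norm_apply_lt_of_mapsTo_ball_zero hr hf ht).le)

theorem exists_linearIsometry_of_norm_apply_eq (f : E →ₗ[ℝ] F) {lam : ℝ} (hlam : 0 < lam)
    (hf : ∀ x, ‖f x‖ = lam * ‖x‖) : ∃ T : E →ₗᵢ[ℝ] F, ∀ x, f x = lam • T x := by
  refine ⟨⟨lam⁻¹ • f, fun x => ?_⟩, fun x => ?_⟩
  · rw [smul_apply, norm_smul, Real.norm_of_nonneg (inv_nonneg.mpr hlam.le), hf,
      inv_mul_cancel_left₀ hlam.ne']
  · simp [smul_smul, mul_inv_cancel₀ hlam.ne']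

end LinearMap

namespace LinearEquiv

theorem norm_apply_eq_of_image_ball_eq (L : E ≃ₗ[ℝ] F) {c : E} {c' : F} {r r' : ℝ}
    (hr : 0 < r) (hr' : 0 < r') (h : L '' ball c r = ball c' r') (x : E) :
    ‖L x‖ = r' / r * ‖x‖ := by
  have hL : MapsTo L (ball 0 r) (ball 0 r') :=
    L.toLinearMap.mapsTo_ball_zero_of_mapsTo_ball (h ▸ mapsTo_image L _)
  have hLsymm : MapsTo L.symm (ball 0 r') (ball 0 r) := by
    refine L.symm.toLinearMap.mapsTo_ball_zero_of_mapsTo_ball (c := c') (c' := c) ?_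
    rw [← h]
    rintro _ ⟨y, hy, rfl⟩
    simpa using hy
  have hupper := L.toLinearMap.norm_apply_le_of_mapsTo_ball_zero hr hL x
  have hlower := L.symm.toLinearMap.norm_apply_le_of_mapsTo_ball_zero hr' hLsymm (L x)
  simp only [coe_coe, symm_apply_apply] at hupper hlower
  refine le_antisymm hupper ?_
  rw [div_mul_eq_mul_div, le_div_iff₀ hr'] at hlower
  rw [div_mul_eq_mul_div, div_le_iff₀ hr]
  linarith

end LinearEquiv

end

theorem stmt_1 (n : ℕ)
    (L : EuclideanSpace ℝ (Fin n) ≃ₗ[ℝ] EuclideanSpace ℝ (Fin n))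
    (c c' : EuclideanSpace ℝ (Fin n)) (r r' : ℝ) (hr : 0 < r) (hr' : 0 < r')
    (h : (fun x => L x) '' Metric.ball c r = Metric.ball c' r') :
    ∃ (lam : ℝ) (T : EuclideanSpace ℝ (Fin n) →ₗᵢ[ℝ] EuclideanSpace ℝ (Fin n)),
      0 < lam ∧ ∀ x, L x = lam • T x := by
  obtain ⟨T, hT⟩ := L.toLinearMap.exists_linearIsometry_of_norm_apply_eq (div_pos hr' hr)
    (L.norm_apply_eq_of_image_ball_eq hr hr' h)
  exact ⟨r' / r, T, div_pos hr' hr, hT⟩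
end

section
/- Let f : ℝⁿ → ℝⁿ be continuous and differentiable at the origin 0 with derivative D₀f. Suppose there is a sequence of open Euclidean balls (Bᵢ) each containing 0, with diameters tending to 0, such that for each i the image f(Bᵢ) is an open Euclidean ball. Then D₀f = λ • T where λ ≥ 0 and T is a linear isometry of ℝⁿ (the derivative is a possibly degenerate conformal linear map). -/
/-!
On a ball `B(c, r) ∋ x₀` of small radius, `f` is `ε r`-close to its linearisation at `x₀`.
If `f(B(c, r)) = B(c', r')`, comparing diameters gives `r ‖D‖ ≤ r' + ε r`, and comparing widths
in the direction of a unit vector `w` (the ellipsoid `D(B(c, r))` has width `2 r ‖D† w‖` there)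
gives `r' ≤ r ‖D† w‖ + ε r`. Letting `r → 0` yields `‖D‖ ≤ ‖D† w‖ ≤ ‖D‖`, so `D†` is `‖D‖`
times a linear isometry. In finite dimension that isometry is onto, so its adjoint is its inverse,
and `D = D††` is again `‖D‖` times an isometry.
-/

open Metric Filter Topology
open scoped InnerProduct InnerProductSpace

variable {E F : Type*}

section Normed

variable [NormedAddCommGroup E] [NormedSpace ℝ E] [NormedAddCommGroup F] [NormedSpace ℝ F]

theorem ContinuousLinearMap.mul_opNorm_le_of_forall_mem_ball {T : E →L[ℝ] F} {R K : ℝ}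
    (hR : 0 < R) (h : ∀ v ∈ ball (0 : E) R, ‖T v‖ ≤ K) : R * ‖T‖ ≤ K := by
  have hK : 0 ≤ K := by simpa using h 0 (mem_ball_self hR)
  have hclosed : ∀ v ∈ closedBall (0 : E) R, ‖T v‖ ≤ K := by
    rw [← closure_ball 0 hR.ne']
    exact closure_minimal h (isClosed_le (continuous_norm.comp T.continuous) continuous_const)
  rw [mul_comm, ← le_div_iff₀ hR]
  refine T.opNorm_le_of_unit_norm (div_nonneg hK hR.le) fun x hx => ?_
  have := hclosed (R • x) (by simp [norm_smul, hx, abs_of_pos hR])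
  rw [map_smul, norm_smul, Real.norm_of_nonneg hR.le] at this
  rwa [le_div_iff₀' hR]

theorem HasFDerivAt.eventually_norm_sub_le_mul_radius {ι : Type*} {l : Filter ι} {f : E → F}
    {D : E →L[ℝ] F} {x₀ : E} (hD : HasFDerivAt f D x₀) {c : ι → E} {r : ι → ℝ}
    (hx₀ : ∀ i, x₀ ∈ ball (c i) (r i)) (hr : Tendsto r l (𝓝 0)) {ε : ℝ} (hε : 0 < ε) :
    ∀ᶠ i in l, ∀ x ∈ ball (c i) (r i), ‖f x - f x₀ - D (x - x₀)‖ ≤ ε * r i := by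
  obtain ⟨δ, hδ, hsmall⟩ := eventually_nhds_iff_ball.mp (hD.isLittleO.def (half_pos hε))
  filter_upwards [hr.eventually (gt_mem_nhds (half_pos hδ))] with i hi x hx
  have hxx₀ : ‖x - x₀‖ < 2 * r i := by
    rw [← dist_eq_norm, two_mul]
    exact (dist_triangle_right _ _ (c i)).trans_lt (add_lt_add hx (hx₀ i))
  calc ‖f x - f x₀ - D (x - x₀)‖ ≤ ε / 2 * ‖x - x₀‖ :=
        hsmall x (by rw [mem_ball, dist_eq_norm]; linarith)
    _ ≤ ε / 2 * (2 * r i) := by gcongr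
    _ = ε * r i := by ring

variable {f : E → F} {D : E →L[ℝ] F} {x₀ c : E} {r η : ℝ}

theorem norm_sub_sub_map_sub_le {s : Set E}
    (h : ∀ x ∈ s, ‖f x - f x₀ - D (x - x₀)‖ ≤ η) {x y : E} (hx : x ∈ s) (hy : y ∈ s) :
    ‖f x - f y - D (x - y)‖ ≤ 2 * η := by
  have : f x - f y - D (x - y) = (f x - f x₀ - D (x - x₀)) - (f y - f x₀ - D (y - x₀)) := by
    simp only [map_sub]; abel
  rw [this, two_mul]
  exact norm_sub_le_of_le (h x hx) (h y hy)

theorem mul_opNorm_le_of_image_ball_subset (hr : 0 < r)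
    (hη : ∀ x ∈ ball c r, ‖f x - f x₀ - D (x - x₀)‖ ≤ η) {c' : F} {r' : ℝ}
    (him : f '' ball c r ⊆ ball c' r') : r * ‖D‖ ≤ r' + η := by
  refine D.mul_opNorm_le_of_forall_mem_ball hr fun v hv => ?_
  rw [mem_ball_zero_iff] at hv
  have hp : c + v ∈ ball c r := by simpa using hv
  have hm : c - v ∈ ball c r := by simpa using hv
  have hdist : ‖f (c + v) - f (c - v)‖ ≤ 2 * r' := by
    rw [← dist_eq_norm, two_mul]
    exact (dist_triangle_right _ _ c').trans
      (add_le_add (him (Set.mem_image_of_mem f hp)).le (him (Set.mem_image_of_mem f hm)).le)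
  have hsub : (c + v) - (c - v) = (2 : ℝ) • v := by rw [two_smul]; abel
  have hbound := calc
    2 * ‖D v‖ = ‖D ((c + v) - (c - v))‖ := by rw [hsub, map_smul, norm_smul, Real.norm_two]
    _ ≤ ‖f (c + v) - f (c - v)‖ + ‖f (c + v) - f (c - v) - D ((c + v) - (c - v))‖ :=
      norm_le_norm_add_norm_sub _ _
    _ ≤ 2 * r' + 2 * η := add_le_add hdist (norm_sub_sub_map_sub_le hη hp hm)
  linarith

end Normed

section InnerProduct

variable [NormedAddCommGroup E] [InnerProductSpace ℝ E] [CompleteSpace E]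
  [NormedAddCommGroup F] [InnerProductSpace ℝ F] [CompleteSpace F]
  {f : E → F} {D : E →L[ℝ] F} {x₀ : E}

theorem mul_norm_le_of_ball_subset_image {c : E} {r η : ℝ}
    (hη : ∀ x ∈ ball c r, ‖f x - f x₀ - D (x - x₀)‖ ≤ η) {c' : F} {r' : ℝ} (hr' : 0 < r')
    (him : ball c' r' ⊆ f '' ball c r) (w : F) : r' * ‖w‖ ≤ r * ‖(D†) w‖ + η * ‖w‖ := by
  conv_lhs => rw [← innerSL_apply_norm ℝ w]
  refine (innerSL ℝ w).mul_opNorm_le_of_forall_mem_ball hr' fun v hv => ?_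
  rw [mem_ball_zero_iff] at hv
  obtain ⟨xp, hxp, hfp⟩ := him (show c' + v ∈ ball c' r' by simpa using hv)
  obtain ⟨xm, hxm, hfm⟩ := him (show c' - v ∈ ball c' r' by simpa using hv)
  have hx : ‖xp - xm‖ ≤ 2 * r := by
    rw [← dist_eq_norm, two_mul]
    exact (dist_triangle_right _ _ c).trans (add_le_add (mem_ball.mp hxp).le (mem_ball.mp hxm).le)
  have hsplit : (2 : ℝ) • v = D (xp - xm) + (f xp - f xm - D (xp - xm)) := by
    rw [hfp, hfm, two_smul]; abel
  have hbound := calc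
    2 * |⟪w, v⟫_ℝ| = |⟪w, D (xp - xm)⟫_ℝ + ⟪w, f xp - f xm - D (xp - xm)⟫_ℝ| := by
      rw [← inner_add_right, ← hsplit, inner_smul_right, abs_mul, abs_two]
    _ ≤ |⟪(D†) w, xp - xm⟫_ℝ| + |⟪w, f xp - f xm - D (xp - xm)⟫_ℝ| := by
      rw [ContinuousLinearMap.adjoint_inner_left]; exact abs_add_le _ _
    _ ≤ ‖(D†) w‖ * ‖xp - xm‖ + ‖w‖ * ‖f xp - f xm - D (xp - xm)‖ :=
      add_le_add (abs_real_inner_le_norm _ _) (abs_real_inner_le_norm _ _)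
    _ ≤ ‖(D†) w‖ * (2 * r) + ‖w‖ * (2 * η) := by
      gcongr
      exact norm_sub_sub_map_sub_le hη hxp hxm
  rw [innerSL_apply_apply, Real.norm_eq_abs]
  linarith

theorem HasFDerivAt.norm_adjoint_apply_eq_of_image_ball_eq_ball {ι : Type*} {l : Filter ι}
    [l.NeBot] (hD : HasFDerivAt f D x₀) {c : ι → E} {r : ι → ℝ}
    (hx₀ : ∀ i, x₀ ∈ ball (c i) (r i)) (hr : Tendsto r l (𝓝 0))
    (him : ∀ i, ∃ (c' : F) (r' : ℝ), 0 < r' ∧ f '' ball (c i) (r i) = ball c' r') (w : F) :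
    ‖(D†) w‖ = ‖D‖ * ‖w‖ := by
  choose c' r' hr' himeq using him
  have key : ∀ ε > 0, ‖D‖ * ‖w‖ ≤ ‖(D†) w‖ + 2 * ε * ‖w‖ := by
    intro ε hε
    obtain ⟨i, hi⟩ := (hD.eventually_norm_sub_le_mul_radius hx₀ hr hε).exists
    have hri : 0 < r i := pos_of_mem_ball (hx₀ i)
    have hA := mul_opNorm_le_of_image_ball_subset hri hi (himeq i).subset
    have hB := mul_norm_le_of_ball_subset_image hi (hr' i) (himeq i).symm.subset w
    have : r i * (‖D‖ * ‖w‖) ≤ r i * (‖(D†) w‖ + 2 * ε * ‖w‖) := by nlinarith [norm_nonneg w]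
    exact le_of_mul_le_mul_left this hri
  have hlim : Tendsto (fun ε : ℝ => ‖(D†) w‖ + 2 * ε * ‖w‖) (𝓝[>] 0) (𝓝 ‖(D†) w‖) := by
    have : Continuous fun ε : ℝ => ‖(D†) w‖ + 2 * ε * ‖w‖ := by fun_prop
    simpa using (this.tendsto 0).mono_left nhdsWithin_le_nhds
  refine le_antisymm ?_ (ge_of_tendsto hlim (eventually_nhdsWithin_of_forall key))
  calc ‖(D†) w‖ ≤ ‖D†‖ * ‖w‖ := (D†).le_opNorm w
    _ = ‖D‖ * ‖w‖ := by rw [ContinuousLinearMap.adjoint.norm_map]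

end InnerProduct

theorem ContinuousLinearMap.exists_smul_linearIsometry_of_norm_adjoint_apply
    [NormedAddCommGroup E] [InnerProductSpace ℝ E] [FiniteDimensional ℝ E] {D : E →L[ℝ] E}
    {c : ℝ} (h : ∀ x, ‖(D†) x‖ = c * ‖x‖) :
    ∃ (lam : ℝ) (T : E →ₗᵢ[ℝ] E), 0 ≤ lam ∧ ∀ x, D x = lam • T x := by
  rcases le_or_gt c 0 with hc | hc
  · have hD : D† = 0 := ext fun x => norm_le_zero_iff.mp <|
      (h x).trans_le (mul_nonpos_of_nonpos_of_nonneg hc (norm_nonneg x))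
    refine ⟨0, LinearIsometry.id, le_rfl, fun x => ?_⟩
    rw [zero_smul, ← adjoint_adjoint D, hD, map_zero, zero_apply]
  · let L : E →ₗᵢ[ℝ] E := ⟨c⁻¹ • (D†).toLinearMap, fun x => by
      simp [norm_smul, h, abs_of_pos hc, hc.ne']⟩
    let e := L.toLinearIsometryEquiv rfl
    have hD : D† = c • (e : E →L[ℝ] E) := ext fun x => by
      simp [e, L, smul_smul, hc.ne']
    refine ⟨c, e.symm.toLinearIsometry, hc.le, fun x => ?_⟩
    rw [← adjoint_adjoint D, hD, map_smulₛₗ, e.adjoint_eq_symm]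
    rfl

theorem stmt_2_general (n : ℕ) (f : EuclideanSpace ℝ (Fin n) → EuclideanSpace ℝ (Fin n))
    (D : EuclideanSpace ℝ (Fin n) →L[ℝ] EuclideanSpace ℝ (Fin n))
    (hD : HasFDerivAt f D 0)
    (c : ℕ → EuclideanSpace ℝ (Fin n)) (r : ℕ → ℝ)
    (h0 : ∀ i, (0 : EuclideanSpace ℝ (Fin n)) ∈ Metric.ball (c i) (r i))
    (hrt : Tendsto r atTop (nhds 0))
    (him : ∀ i, ∃ (c' : EuclideanSpace ℝ (Fin n)) (r' : ℝ), 0 < r' ∧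
      f '' Metric.ball (c i) (r i) = Metric.ball c' r') :
    ∃ (lam : ℝ) (T : EuclideanSpace ℝ (Fin n) →ₗᵢ[ℝ] EuclideanSpace ℝ (Fin n)),
      0 ≤ lam ∧ ∀ x, D x = lam • T x :=
  ContinuousLinearMap.exists_smul_linearIsometry_of_norm_adjoint_apply
    (hD.norm_adjoint_apply_eq_of_image_ball_eq_ball h0 hrt him)

theorem stmt_2 (n : ℕ) (f : EuclideanSpace ℝ (Fin n) → EuclideanSpace ℝ (Fin n))
    (hf : Continuous f)
    (D : EuclideanSpace ℝ (Fin n) →L[ℝ] EuclideanSpace ℝ (Fin n))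
    (hD : HasFDerivAt f D 0)
    (c : ℕ → EuclideanSpace ℝ (Fin n)) (r : ℕ → ℝ)
    (hr : ∀ i, 0 < r i)
    (h0 : ∀ i, (0 : EuclideanSpace ℝ (Fin n)) ∈ Metric.ball (c i) (r i))
    (hrt : Tendsto r atTop (nhds 0))
    (him : ∀ i, ∃ (c' : EuclideanSpace ℝ (Fin n)) (r' : ℝ), 0 < r' ∧
      f '' Metric.ball (c i) (r i) = Metric.ball c' r') :
    ∃ (lam : ℝ) (T : EuclideanSpace ℝ (Fin n) →ₗᵢ[ℝ] EuclideanSpace ℝ (Fin n)),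
      0 ≤ lam ∧ ∀ x, D x = lam • T x :=
  stmt_2_general n f D hD c r h0 hrt him
end

section
/- Let f : ℝⁿ → ℝⁿ be a C¹ diffeomorphism whose derivative is uniformly continuous, let p ∈ ℝⁿ, and suppose there exist balls Bᵢ = B(qᵢ, rᵢ) with rᵢ → 0 and closed balls converging to {p} in Hausdorff distance, such that f maps each sphere ∂Bᵢ onto a Euclidean sphere. Then D_p f is a conformal linear map: D_p f = λ • T with λ > 0 and T a linear isometry. -/
/-!
Near `p` the map `f` is, to first order, the affine map `x ↦ f q + A (x - q)` with `A = D_p f`,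
with an error `ε r` on the sphere `S(q, r)` that is small compared with `r` once the ball is close
to `p` (strict differentiability). Hence the ellipsoid `f q + r • A (S(0, 1))` lies within `ε r` of
the round sphere `f (S(q, r))`. By the parallelogram law, applied to the two points of the ellipsoid
in directions `± u`, this forces `‖A u‖² ≤ ‖A v‖² + O(ε)` for all unit vectors `u`, `v`, so `A` has
constant norm on the unit sphere and, being injective, is a positive multiple of an isometry.
-/

open Filter Metric Topology

section PseudoMetric

variable {α : Type*} [PseudoMetricSpace α]

lemma dist_le_hausdorffDist_closedBall_singleton {q p : α} {r : ℝ} (hr : 0 ≤ r) :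
    dist q p ≤ hausdorffDist (closedBall q r) {p} := by
  have hfin : hausdorffEDist (closedBall q r) {p} ≠ ⊤ :=
    hausdorffEDist_ne_top_of_nonempty_of_bounded ⟨q, mem_closedBall_self hr⟩
      (Set.singleton_nonempty p) isBounded_closedBall Bornology.isBounded_singleton
  simpa using infDist_le_hausdorffDist_of_mem (mem_closedBall_self hr) hfin

lemma Filter.Tendsto.eventually_closedBall_subset {ι : Type*} {l : Filter ι} {q : ι → α}
    {r : ι → ℝ} {p : α} {s : Set α} (hq : Tendsto q l (𝓝 p)) (hr : Tendsto r l (𝓝 0))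
    (hs : s ∈ 𝓝 p) : ∀ᶠ i in l, closedBall (q i) (r i) ⊆ s := by
  obtain ⟨δ, hδ, hδs⟩ := nhds_basis_closedBall.mem_iff.1 hs
  have hsum : Tendsto (fun i => r i + dist (q i) p) l (𝓝 0) := by
    simpa using hr.add (tendsto_iff_dist_tendsto_zero.1 hq)
  filter_upwards [hsum.eventually (ge_mem_nhds hδ)] with i hi
  exact (closedBall_subset_closedBall' hi).trans hδs

end PseudoMetric

lemma norm_sq_le_norm_sq_add_of_near_sphere {F : Type*} [NormedAddCommGroup F]
    [InnerProductSpace ℝ F] {m c x y : F} {ρ η : ℝ} (hρ : 0 ≤ ρ)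
    (hx₁ : |dist (m + x) c - ρ| ≤ η) (hx₂ : |dist (m - x) c - ρ| ≤ η)
    (hy₁ : |dist (m + y) c - ρ| ≤ η) (hy₂ : |dist (m - y) c - ρ| ≤ η) :
    ‖x‖ ^ 2 ≤ ‖y‖ ^ 2 + (4 * ρ * η + η ^ 2) := by
  have hx := parallelogram_law_with_norm ℝ (m - c) x
  have hy := parallelogram_law_with_norm ℝ (m - c) y
  rw [show m - c + x = m + x - c by abel, show m - c - x = m - x - c by abel,
    ← dist_eq_norm, ← dist_eq_norm] at hx
  rw [show m - c + y = m + y - c by abel, show m - c - y = m - y - c by abel,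
    ← dist_eq_norm, ← dist_eq_norm] at hy
  have upper : ∀ d : ℝ, 0 ≤ d → |d - ρ| ≤ η → d ^ 2 ≤ (ρ + η) ^ 2 := fun d hd h =>
    pow_le_pow_left₀ hd (by linarith [(abs_le.1 h).2]) 2
  have lower : ∀ d : ℝ, 0 ≤ d → |d - ρ| ≤ η → ρ ^ 2 - 2 * ρ * η ≤ d ^ 2 := by
    intro d hd hdρ
    have h : ρ - η ≤ d := by linarith [(abs_le.1 hdρ).1]
    rcases le_or_gt η ρ with hηρ | hρη
    · nlinarith [pow_le_pow_left₀ (sub_nonneg.2 hηρ) h 2, sq_nonneg η]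
    · nlinarith [mul_nonneg hρ (by linarith : 0 ≤ 2 * η - ρ), sq_nonneg d]
  nlinarith [upper _ dist_nonneg hx₁, upper _ dist_nonneg hx₂,
    lower _ dist_nonneg hy₁, lower _ dist_nonneg hy₂]

section Sphere

variable {E F : Type*} [NormedAddCommGroup E] [NormedSpace ℝ E]
  [NormedAddCommGroup F] [NormedSpace ℝ F] {f : E → F} {A : E →L[ℝ] F} {q : E} {c : F} {r ρ η : ℝ}

lemma abs_dist_affine_sub_le_of_image_sphere (hsph : f '' sphere q r = sphere c ρ)
    (happrox : ∀ x ∈ sphere q r, ‖f x - f q - A (x - q)‖ ≤ η) {x : E} (hx : x ∈ sphere q r) :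
    |dist (f q + A (x - q)) c - ρ| ≤ η := by
  have hfx : f x ∈ sphere c ρ := hsph ▸ Set.mem_image_of_mem f hx
  calc |dist (f q + A (x - q)) c - ρ| = |dist (f q + A (x - q)) c - dist (f x) c| := by
        rw [mem_sphere.1 hfx]
    _ ≤ dist (f q + A (x - q)) (f x) := abs_dist_sub_le _ _ _
    _ = ‖f x - f q - A (x - q)‖ := by rw [dist_comm, dist_eq_norm, sub_sub]
    _ ≤ η := happrox x hx

lemma radius_le_of_image_sphere (hsph : f '' sphere q r = sphere c ρ)
    (happrox : ∀ x ∈ sphere q r, ‖f x - f q - A (x - q)‖ ≤ η) {x : E} (hx : x ∈ sphere q r) :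
    ρ ≤ ‖A‖ * r + η := by
  have hfx : f x ∈ sphere c ρ := hsph ▸ Set.mem_image_of_mem f hx
  have hanti : c - (f x - c) ∈ sphere c ρ := by
    simpa [dist_eq_norm, norm_sub_rev] using hfx
  obtain ⟨y, hy, hfy⟩ := hsph.symm ▸ hanti
  have hnear : ∀ z ∈ sphere q r, ‖f z - f q‖ ≤ ‖A‖ * r + η := fun z hz =>
    calc ‖f z - f q‖ ≤ ‖A (z - q)‖ + ‖f z - f q - A (z - q)‖ := norm_le_insert' _ _
      _ ≤ ‖A‖ * r + η := by
        gcongr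
        · exact (A.le_opNorm _).trans_eq (by rw [← dist_eq_norm, mem_sphere.1 hz])
        · exact happrox z hz
  have hdiam : ‖f x - f y‖ = 2 * ρ := by
    rw [hfy, show f x - (c - (f x - c)) = (2 : ℝ) • (f x - c) by module, norm_smul,
      ← dist_eq_norm, mem_sphere.1 hfx, Real.norm_two]
  have := norm_sub_le_norm_sub_add_norm_sub (f x) (f q) (f y)
  rw [← norm_neg (f q - f y), neg_sub] at this
  linarith [hnear x hx, hnear y hy]

end Sphere

section Conformal

variable {E F : Type*} [NormedAddCommGroup E] [NormedSpace ℝ E]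
  [NormedAddCommGroup F] [InnerProductSpace ℝ F] {f : E → F} {A : E →L[ℝ] F}

lemma sq_norm_apply_le_of_image_sphere {q : E} {c : F} {r ρ ε : ℝ} (hr : 0 < r) (hρ : 0 ≤ ρ)
    (hε : 0 ≤ ε) (hsph : f '' sphere q r = sphere c ρ)
    (happrox : ∀ x ∈ sphere q r, ‖f x - f q - A (x - q)‖ ≤ ε * r) {u v : E} (hu : ‖u‖ = 1)
    (hv : ‖v‖ = 1) :
    ‖A u‖ ^ 2 ≤ ‖A v‖ ^ 2 + ε * (4 * ‖A‖ + 5 * ε) := by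
  have hmem : ∀ w : E, ‖w‖ = 1 → q + r • w ∈ sphere q r := fun w hw => by
    simp [norm_smul, hw, abs_of_pos hr]
  have hnear : ∀ w : E, ‖w‖ = 1 → |dist (f q + r • A w) c - ρ| ≤ ε * r := fun w hw => by
    simpa using abs_dist_affine_sub_le_of_image_sphere hsph happrox (hmem w hw)
  have hnear' : ∀ w : E, ‖w‖ = 1 → |dist (f q - r • A w) c - ρ| ≤ ε * r := fun w hw => by
    simpa [sub_eq_add_neg] using hnear (-w) (by rwa [norm_neg])
  have hρr : ρ ≤ ‖A‖ * r + ε * r := radius_le_of_image_sphere hsph happrox (hmem u hu)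
  have key := norm_sq_le_norm_sq_add_of_near_sphere hρ (hnear u hu) (hnear' u hu) (hnear v hv)
    (hnear' v hv)
  rw [norm_smul, norm_smul, Real.norm_of_nonneg hr.le] at key
  have hscaled : r ^ 2 * ‖A u‖ ^ 2 ≤ r ^ 2 * (‖A v‖ ^ 2 + ε * (4 * ‖A‖ + 5 * ε)) := by
    nlinarith [mul_le_mul_of_nonneg_right hρr (by positivity : 0 ≤ ε * r)]
  exact le_of_mul_le_mul_left hscaled (by positivity)

theorem HasStrictFDerivAt.norm_apply_eq_of_image_sphere {ι : Type*} {l : Filter ι} [l.NeBot]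
    {p : E} (hf : HasStrictFDerivAt f A p) {q : ι → E} {r : ι → ℝ} (hr : ∀ i, 0 < r i)
    (hq : Tendsto q l (𝓝 p)) (hrt : Tendsto r l (𝓝 0))
    (hsph : ∀ i, ∃ (c : F) (ρ : ℝ), 0 < ρ ∧ f '' sphere (q i) (r i) = sphere c ρ) {u v : E}
    (hu : ‖u‖ = 1) (hv : ‖v‖ = 1) :
    ‖A u‖ = ‖A v‖ := by
  have hsq : ∀ u v : E, ‖u‖ = 1 → ‖v‖ = 1 → ‖A u‖ ^ 2 ≤ ‖A v‖ ^ 2 := by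
    intro u v hu hv
    have hlim : Tendsto (fun ε : ℝ => ‖A v‖ ^ 2 + ε * (4 * ‖A‖ + 5 * ε)) (𝓝[>] 0)
        (𝓝 (‖A v‖ ^ 2)) := by
      have hcont : Continuous fun ε : ℝ => ‖A v‖ ^ 2 + ε * (4 * ‖A‖ + 5 * ε) := by fun_prop
      simpa using (hcont.tendsto 0).mono_left nhdsWithin_le_nhds
    refine ge_of_tendsto hlim (eventually_nhdsWithin_of_forall fun ε (hε : 0 < ε) => ?_)
    obtain ⟨s, hs, happ⟩ := hf.approximates_deriv_on_nhds (c := ⟨ε, hε.le⟩) (Or.inr hε)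
    obtain ⟨i, hi⟩ := (hq.eventually_closedBall_subset hrt hs).exists
    obtain ⟨c, ρ, hρ, hsphi⟩ := hsph i
    refine sq_norm_apply_le_of_image_sphere (hr i) hρ.le hε.le hsphi (fun x hx => ?_) hu hv
    have := happ x (hi (sphere_subset_closedBall hx)) (q i) (hi (mem_closedBall_self (hr i).le))
    rwa [← dist_eq_norm x, mem_sphere.1 hx] at this
  exact (sq_eq_sq₀ (norm_nonneg _) (norm_nonneg _)).1 ((hsq u v hu hv).antisymm (hsq v u hv hu))

end Conformal

lemma ContinuousLinearMap.exists_pos_smul_linearIsometry_of_norm_eq {E F : Type*}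
    [NormedAddCommGroup E] [NormedSpace ℝ E] [NormedAddCommGroup F] [NormedSpace ℝ F]
    {A : E →L[ℝ] F} (hA : Function.Injective A)
    (h : ∀ u v : E, ‖u‖ = 1 → ‖v‖ = 1 → ‖A u‖ = ‖A v‖) :
    ∃ (lam : ℝ) (T : E →ₗᵢ[ℝ] F), 0 < lam ∧ ∀ x, A x = lam • T x := by
  rcases subsingleton_or_nontrivial E with hE | hE
  · exact ⟨1, ⟨0, fun x => by simp [Subsingleton.elim x 0]⟩, one_pos,
      fun x => by simp [Subsingleton.elim x 0]⟩
  obtain ⟨e, he⟩ := exists_norm_eq E zero_le_one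
  have hlam : 0 < ‖A e‖ := norm_pos_iff.2 fun h0 => by
    simp [hA (h0.trans A.map_zero.symm)] at he
  have hscale : ∀ x, ‖A x‖ = ‖A e‖ * ‖x‖ := by
    intro x
    rcases eq_or_ne x 0 with rfl | hx
    · simp
    have := h (‖x‖⁻¹ • x) e (norm_smul_inv_norm hx) he
    rw [map_smul, norm_smul, norm_inv, norm_norm] at this
    field_simp at this
    linarith
  refine ⟨‖A e‖, ⟨‖A e‖⁻¹ • (A : E →ₗ[ℝ] F), fun x => ?_⟩, hlam, fun x => ?_⟩
  · change ‖‖A e‖⁻¹ • A x‖ = ‖x‖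
    rw [norm_smul, hscale x, norm_inv, norm_norm, inv_mul_cancel_left₀ hlam.ne']
  · simp [smul_smul, hlam.ne']

theorem stmt_6_general (n : ℕ)
    (f : EuclideanSpace ℝ (Fin n) → EuclideanSpace ℝ (Fin n))
    (hf : ContDiff ℝ 1 f)
    (hinv : ∀ x, Function.Bijective (fderiv ℝ f x))
    (p : EuclideanSpace ℝ (Fin n)) (q : ℕ → EuclideanSpace ℝ (Fin n)) (r : ℕ → ℝ)
    (hr : ∀ i, 0 < r i) (hrt : Tendsto r atTop (nhds 0))
    (hH : Tendsto (fun i => Metric.hausdorffDist (Metric.closedBall (q i) (r i))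
      ({p} : Set (EuclideanSpace ℝ (Fin n)))) atTop (nhds 0))
    (hsph : ∀ i, ∃ (c : EuclideanSpace ℝ (Fin n)) (ρ : ℝ), 0 < ρ ∧
      f '' Metric.sphere (q i) (r i) = Metric.sphere c ρ) :
    ∃ (lam : ℝ) (T : EuclideanSpace ℝ (Fin n) →ₗᵢ[ℝ] EuclideanSpace ℝ (Fin n)),
      0 < lam ∧ ∀ x, fderiv ℝ f p x = lam • T x := by
  have hq : Tendsto q atTop (𝓝 p) := tendsto_iff_dist_tendsto_zero.2 <|
    squeeze_zero (fun _ => dist_nonneg)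
      (fun i => dist_le_hausdorffDist_closedBall_singleton (hr i).le) hH
  have hA : HasStrictFDerivAt f (fderiv ℝ f p) p := hf.hasStrictFDerivAt one_ne_zero
  exact (fderiv ℝ f p).exists_pos_smul_linearIsometry_of_norm_eq (hinv p).1
    fun u v hu hv => hA.norm_apply_eq_of_image_sphere hr hq hrt hsph hu hv

theorem stmt_6 (n : ℕ) (hn : 2 ≤ n)
    (f : EuclideanSpace ℝ (Fin n) → EuclideanSpace ℝ (Fin n))
    (hf : ContDiff ℝ 1 f) (hbij : Function.Bijective f)
    (hinv : ∀ x, Function.Bijective (fderiv ℝ f x))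
    (hu : UniformContinuous (fderiv ℝ f))
    (p : EuclideanSpace ℝ (Fin n)) (q : ℕ → EuclideanSpace ℝ (Fin n)) (r : ℕ → ℝ)
    (hr : ∀ i, 0 < r i) (hrt : Tendsto r atTop (nhds 0))
    (hH : Tendsto (fun i => Metric.hausdorffDist (Metric.closedBall (q i) (r i))
      ({p} : Set (EuclideanSpace ℝ (Fin n)))) atTop (nhds 0))
    (hsph : ∀ i, ∃ (c : EuclideanSpace ℝ (Fin n)) (ρ : ℝ), 0 < ρ ∧
      f '' Metric.sphere (q i) (r i) = Metric.sphere c ρ) :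
    ∃ (lam : ℝ) (T : EuclideanSpace ℝ (Fin n) →ₗᵢ[ℝ] EuclideanSpace ℝ (Fin n)),
      0 < lam ∧ ∀ x, fderiv ℝ f p x = lam • T x :=
  stmt_6_general n f hf hinv p q r hr hrt hH hsph
end

section
/- Let f, g : ℝⁿ → ℝⁿ both be differentiable at a point p, and suppose f = g on a set Λ for which p is a point where the rescaled sets (Λ − p)/rₖ ∩ ∂B(0,1) become dense in the unit sphere as rₖ → 0 (e.g., p is a Lebesgue density point of Λ). Then D_p f = D_p g. -/
/-! The hypothesis puts every unit vector into the tangent cone of `Λ` at `p`, so `Λ` is a set of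
unique differentiability at `p`. Since `f = g` on `Λ`, and hence also at `p` by continuity, `Df`
and `Dg` are both derivatives of `g` within `Λ` at `p`, and therefore coincide. -/

open Filter Metric Set Topology

theorem mem_tangentConeAt_of_tendsto_of_add_smul_mem {𝕜 E : Type*} [NontriviallyNormedField 𝕜]
    [NormedAddCommGroup E] [NormedSpace 𝕜 E] {s : Set E} {p x : E} {r : ℕ → 𝕜}
    {xs : ℕ → E} (hr : ∀ k, r k ≠ 0) (hrt : Tendsto r atTop (𝓝 0))
    (hmem : ∀ k, p + r k • xs k ∈ s) (hxs : Tendsto xs atTop (𝓝 x)) :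
    x ∈ tangentConeAt 𝕜 s p := by
  refine mem_tangentConeAt_of_seq atTop (fun k => (r k)⁻¹) (fun k => r k • xs k) ?_
    (Eventually.of_forall hmem) ?_
  · simpa using hrt.smul hxs
  · simpa only [inv_smul_smul₀ (hr _)] using hxs

theorem Submodule.span_sphere_zero_one_eq_top {E : Type*} [NormedAddCommGroup E]
    [NormedSpace ℝ E] : Submodule.span ℝ (sphere (0 : E) 1) = ⊤ := by
  refine Submodule.eq_top_iff'.2 fun v => ?_
  rcases eq_or_ne v 0 with rfl | hv
  · exact zero_mem _
  · have hu : ‖v‖⁻¹ • v ∈ sphere (0 : E) 1 := by simp [norm_smul, hv]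
    simpa [smul_smul, hv] using Submodule.smul_mem _ ‖v‖ (Submodule.subset_span hu)

theorem uniqueDiffWithinAt_of_sphere_subset_tangentConeAt {E : Type*} [NormedAddCommGroup E]
    [NormedSpace ℝ E] [Nontrivial E] {s : Set E} {p : E}
    (h : sphere 0 1 ⊆ tangentConeAt ℝ s p) : UniqueDiffWithinAt ℝ s p where
  dense_tangentConeAt := by
    have : Submodule.span ℝ (tangentConeAt ℝ s p) = ⊤ :=
      top_unique (Submodule.span_sphere_zero_one_eq_top.symm.trans_le (Submodule.span_mono h))
    simp [this]
  mem_closure := by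
    obtain ⟨u, hu⟩ := exists_norm_eq E zero_le_one
    exact mem_closure_of_nonempty_tangentConeAt ⟨u, h (by simpa using hu)⟩

theorem UniqueDiffWithinAt.eq_of_hasFDerivAt_of_eqOn {𝕜 E F : Type*} [NontriviallyNormedField 𝕜]
    [NormedAddCommGroup E] [NormedSpace 𝕜 E] [NormedAddCommGroup F] [NormedSpace 𝕜 F]
    {f g : E → F} {f' g' : E →L[𝕜] F} {s : Set E} {p : E} (hs : UniqueDiffWithinAt 𝕜 s p)
    (hf : HasFDerivAt f f' p) (hg : HasFDerivAt g g' p) (hfg : EqOn f g s) : f' = g' := by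
  have hp : f p - g p = 0 :=
    (hf.continuousAt.sub hg.continuousAt).continuousWithinAt.eq_const_of_mem_closure
      hs.mem_closure fun y hy => sub_eq_zero.2 (hfg hy)
  exact hs.eq (hf.hasFDerivWithinAt.congr hfg.symm (sub_eq_zero.1 hp).symm) hg.hasFDerivWithinAt

theorem stmt_9 (n : ℕ) (f g : EuclideanSpace ℝ (Fin n) → EuclideanSpace ℝ (Fin n))
    (p : EuclideanSpace ℝ (Fin n))
    (Df Dg : EuclideanSpace ℝ (Fin n) →L[ℝ] EuclideanSpace ℝ (Fin n))
    (hf : HasFDerivAt f Df p) (hg : HasFDerivAt g Dg p)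
    (Λ : Set (EuclideanSpace ℝ (Fin n))) (heq : Set.EqOn f g Λ)
    (r : ℕ → ℝ) (hr : ∀ k, 0 < r k) (hrt : Tendsto r atTop (nhds 0))
    (hdens : ∀ x : EuclideanSpace ℝ (Fin n), ‖x‖ = 1 →
      ∃ xs : ℕ → EuclideanSpace ℝ (Fin n),
        (∀ k, ‖xs k‖ = 1 ∧ p + r k • xs k ∈ Λ) ∧ Tendsto xs atTop (nhds x)) :
    Df = Dg := by
  rcases subsingleton_or_nontrivial (EuclideanSpace ℝ (Fin n)) with hE | hE
  · exact ContinuousLinearMap.ext fun _ => Subsingleton.elim _ _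
  have hΛ : UniqueDiffWithinAt ℝ Λ p := by
    refine uniqueDiffWithinAt_of_sphere_subset_tangentConeAt fun x hx => ?_
    obtain ⟨xs, hxs, hlim⟩ := hdens x (by simpa using hx)
    exact mem_tangentConeAt_of_tendsto_of_add_smul_mem (fun k => (hr k).ne') hrt
      (fun k => (hxs k).2) hlim
  exact hΛ.eq_of_hasFDerivAt_of_eqOn hf hg heq
end

section
/- Let L : ℝⁿ → ℝⁿ be an invertible linear map, and suppose the images L(∂B(0,1)) arise as Hausdorff limits of spheres Sᵢ/rᵢ where each Sᵢ is a Euclidean sphere enclosing 0 (i.e., 0 lies in the open ball bounded by Sᵢ). If fᵢ(x) := (f(qᵢ + rᵢ x) − f(qᵢ))/rᵢ converges uniformly on ∂B(0,1) to L and each fᵢ(∂B(0,1)) is a Euclidean sphere enclosing 0, then L(∂B(0,1)) is a Euclidean sphere, and hence L is a conformal linear map (λ • T with λ > 0, T a linear isometry). -/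
/-!
Since `L` is bounded on the unit sphere, the spheres `Sᵢ = fᵢ(∂B(0,1))` eventually lie in a fixed
ball, so their centres and radii are bounded and a subsequence converges to some `(c, ρ)`.
Pointwise convergence puts `L(∂B(0,1))` inside `∂B(c, ρ)`, and since `L` is injective this forces
`ρ > 0`; then every point of `∂B(c, ρ)` is a limit of points of the `Sᵢ`, hence (by uniform
convergence and compactness) lies in `L(∂B(0,1))`. Finally, the image of the unit sphere under a
linear map is symmetric about `0`, which forces `c = 0`; thus `‖L x‖ = ρ ‖x‖` and `ρ⁻¹ L` is an
isometry.
-/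

open Filter Metric Set Topology

theorem sphere_nontrivial {E : Type*} [NormedAddCommGroup E] [NormedSpace ℝ E] [Nontrivial E]
    (x : E) {r : ℝ} (hr : 0 < r) : (sphere x r).Nontrivial := by
  obtain ⟨u, hu⟩ := exists_norm_eq E hr.le
  refine ⟨x + u, ?_, x - u, ?_, fun h => ?_⟩
  · simp [hu]
  · simp [hu]
  · have h2u : ‖(2 : ℝ) • u‖ = 0 := by
      rw [show (2 : ℝ) • u = (x + u) - (x - u) by module, h, sub_self, norm_zero]
    rw [norm_smul, hu] at h2u
    norm_num at h2u
    exact hr.ne' h2u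

theorem norm_le_and_radius_le_of_sphere_subset_closedBall {E : Type*} [NormedAddCommGroup E]
    [NormedSpace ℝ E] [Nontrivial E] {c : E} {ρ R : ℝ} (hρ : 0 ≤ ρ)
    (h : sphere c ρ ⊆ closedBall 0 R) : ‖c‖ ≤ R ∧ ρ ≤ R := by
  obtain ⟨u, hu⟩ := exists_norm_eq E zero_le_one
  have hplus : ‖c + ρ • u‖ ≤ R :=
    mem_closedBall_zero_iff.1 (h (by simp [norm_smul, hu, abs_of_nonneg hρ]))
  have hminus : ‖c - ρ • u‖ ≤ R :=
    mem_closedBall_zero_iff.1 (h (by simp [norm_smul, hu, abs_of_nonneg hρ]))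
  have hsum := norm_add_le (c + ρ • u) (c - ρ • u)
  have hdiff := norm_sub_le (c + ρ • u) (c - ρ • u)
  rw [show c + ρ • u + (c - ρ • u) = (2 : ℝ) • c by module, norm_smul] at hsum
  rw [show c + ρ • u - (c - ρ • u) = (2 * ρ) • u by module, norm_smul, hu] at hdiff
  simp only [Real.norm_ofNat, Real.norm_eq_abs] at hsum hdiff
  constructor <;> linarith [abs_of_nonneg (mul_nonneg zero_le_two hρ)]

section SphereLimits

variable {ι α E : Type*} {l : Filter ι} {F : ι → α → E} {g : α → E} {K : Set α}
  {c : ι → E} {ρ : ι → ℝ} {c₀ : E} {ρ₀ : ℝ}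

theorem TendstoUniformlyOn.eventually_image_subset_closedBall [PseudoMetricSpace E]
    (hFg : TendstoUniformlyOn F g l K) {a : E} {R ε : ℝ} (hR : g '' K ⊆ closedBall a R)
    (hε : 0 < ε) : ∀ᶠ i in l, F i '' K ⊆ closedBall a (R + ε) := by
  filter_upwards [Metric.tendstoUniformlyOn_iff.1 hFg ε hε] with i hi
  rintro _ ⟨x, hx, rfl⟩
  have hgx := mem_closedBall.1 (hR (mem_image_of_mem g hx))
  rw [mem_closedBall]
  linarith [dist_triangle (F i x) (g x) a, dist_comm (F i x) (g x), hi x hx]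

theorem image_subset_sphere_of_tendsto [MetricSpace E] [l.NeBot]
    (hFg : ∀ x ∈ K, Tendsto (fun i => F i x) l (𝓝 (g x)))
    (hFK : ∀ᶠ i in l, F i '' K ⊆ sphere (c i) (ρ i))
    (hc : Tendsto c l (𝓝 c₀)) (hρ : Tendsto ρ l (𝓝 ρ₀)) : g '' K ⊆ sphere c₀ ρ₀ := by
  rintro _ ⟨x, hx, rfl⟩
  refine mem_sphere.2 (tendsto_nhds_unique ((hFg x hx).dist hc) (hρ.congr' ?_))
  filter_upwards [hFK] with i hi
  exact (mem_sphere.1 (hi (mem_image_of_mem _ hx))).symm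

theorem sphere_subset_image_of_tendstoUniformlyOn [TopologicalSpace α] [NormedAddCommGroup E]
    [NormedSpace ℝ E] [l.NeBot] (hK : IsCompact K) (hg : ContinuousOn g K)
    (hFg : TendstoUniformlyOn F g l K) (hFK : ∀ᶠ i in l, sphere (c i) (ρ i) ⊆ F i '' K)
    (hc : Tendsto c l (𝓝 c₀)) (hρ : Tendsto ρ l (𝓝 ρ₀)) (hρ₀ : 0 < ρ₀) :
    sphere c₀ ρ₀ ⊆ g '' K := by
  intro y hy
  rw [← (hK.image_of_continuousOn hg).isClosed.closure_eq, Metric.mem_closure_iff]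
  intro ε hε
  set y' : ι → E := fun i => c i + (ρ i / ρ₀) • (y - c₀)
  have hy' : Tendsto y' l (𝓝 y) := by
    simpa [hρ₀.ne'] using hc.add ((hρ.div_const ρ₀).smul_const (y - c₀))
  have hy'_mem : ∀ᶠ i in l, y' i ∈ sphere (c i) (ρ i) := by
    filter_upwards [hρ.eventually (lt_mem_nhds hρ₀)] with i hi
    rw [mem_sphere_iff_norm, add_sub_cancel_left, norm_smul, mem_sphere_iff_norm.1 hy,
      Real.norm_of_nonneg (by positivity), div_mul_cancel₀ _ hρ₀.ne']
  obtain ⟨i, hFi, hyi, hcover, hmem⟩ := ((Metric.tendstoUniformlyOn_iff.1 hFg _ (half_pos hε)).and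
    ((Metric.tendsto_nhds.1 hy' _ (half_pos hε)).and (hFK.and hy'_mem))).exists
  obtain ⟨x, hx, hFx⟩ := hcover hmem
  refine ⟨g x, mem_image_of_mem g hx, ?_⟩
  calc dist y (g x) ≤ dist (y' i) y + dist (g x) (F i x) := by
        rw [dist_comm (y' i), dist_comm (g x), ← hFx]; exact dist_triangle _ _ _
    _ < ε := by linarith [hFi x hx]

theorem exists_image_eq_sphere_of_tendstoUniformlyOn [TopologicalSpace α] [NormedAddCommGroup E]
    [NormedSpace ℝ E] [ProperSpace E] [Nontrivial E] {F : ℕ → α → E} {c : ℕ → E} {ρ : ℕ → ℝ}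
    (hK : IsCompact K) (hg : ContinuousOn g K) (hgK : (g '' K).Nontrivial)
    (hFg : TendstoUniformlyOn F g atTop K) (hFK : ∀ i, F i '' K = sphere (c i) (ρ i))
    (hρ : ∀ i, 0 ≤ ρ i) : ∃ c₀ ρ₀, 0 < ρ₀ ∧ g '' K = sphere c₀ ρ₀ := by
  obtain ⟨R, -, hR⟩ := (hK.image_of_continuousOn hg).isBounded.subset_closedBall_lt 0 0
  have hbdd : ∀ᶠ i in atTop, (c i, ρ i) ∈ closedBall (0 : E) (R + 1) ×ˢ Icc 0 (R + 1) := by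
    filter_upwards [hFg.eventually_image_subset_closedBall hR one_pos] with i hi
    obtain ⟨hci, hρi⟩ := norm_le_and_radius_le_of_sphere_subset_closedBall (hρ i) (hFK i ▸ hi)
    exact ⟨mem_closedBall_zero_iff.2 hci, hρ i, hρi⟩
  obtain ⟨⟨c₀, ρ₀⟩, ⟨-, (hρ₀ : 0 ≤ ρ₀), -⟩, φ, hφ, hlim⟩ :=
    ((isCompact_closedBall _ _).prod isCompact_Icc).tendsto_subseq' hbdd.frequently
  have hc : Tendsto c (atTop.map φ) (𝓝 c₀) :=
    tendsto_map'_iff.2 ((continuous_fst.tendsto _).comp hlim)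
  have hρ' : Tendsto ρ (atTop.map φ) (𝓝 ρ₀) :=
    tendsto_map'_iff.2 ((continuous_snd.tendsto _).comp hlim)
  have hFg' : TendstoUniformlyOn F g (atTop.map φ) K := fun u hu =>
    hφ.tendsto_atTop.eventually (hFg u hu)
  have hsub : g '' K ⊆ sphere c₀ ρ₀ := image_subset_sphere_of_tendsto
    (fun x hx => hFg'.tendsto_at hx) (Eventually.of_forall fun i => (hFK i).subset) hc hρ'
  have hρ₀_pos : 0 < ρ₀ := by
    refine hρ₀.lt_of_ne fun h => ?_
    rw [← h, sphere_zero] at hsub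
    exact not_nontrivial_singleton (hgK.mono hsub)
  exact ⟨c₀, ρ₀, hρ₀_pos, hsub.antisymm (sphere_subset_image_of_tendstoUniformlyOn hK hg hFg'
    (Eventually.of_forall fun i => (hFK i).superset) hc hρ' hρ₀_pos)⟩

end SphereLimits

namespace LinearMap

variable {E F : Type*} [NormedAddCommGroup E] [NormedSpace ℝ E] [NormedAddCommGroup F]
  [NormedSpace ℝ F] (L : E →ₗ[ℝ] F) {c : F} {ρ : ℝ}

theorem eq_zero_of_mapsTo_sphere (hL : Function.Surjective L)
    (h : MapsTo L (sphere 0 1) (sphere c ρ)) : c = 0 := by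
  obtain ⟨z, rfl⟩ := hL c
  rcases eq_or_ne z 0 with rfl | hz
  · exact map_zero L
  set t : ℝ := ‖z‖⁻¹
  have ht : 0 < t := inv_pos.2 (norm_pos_iff.2 hz)
  have hu : t • z ∈ sphere (0 : E) 1 := by simpa using norm_smul_inv_norm (𝕜 := ℝ) hz
  have hu' : -(t • z) ∈ sphere (0 : E) 1 := by
    rwa [mem_sphere_zero_iff_norm, norm_neg, ← mem_sphere_zero_iff_norm]
  have h₁ := mem_sphere_iff_norm.1 (h hu)
  have h₂ := mem_sphere_iff_norm.1 (h hu')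
  rw [map_smul, show t • L z - L z = (t - 1) • L z by module, norm_smul] at h₁
  rw [map_neg, map_smul, show -(t • L z) - L z = -((t + 1) • L z) by module, norm_neg,
    norm_smul] at h₂
  have habs : ‖t - 1‖ < ‖t + 1‖ := by
    simp only [Real.norm_eq_abs, abs_of_pos (by linarith : 0 < t + 1), abs_lt]
    constructor <;> linarith
  exact norm_eq_zero.1 (by nlinarith [norm_nonneg (L z)])

theorem exists_linearIsometry_of_mapsTo_sphere (hρ : 0 < ρ)
    (h : MapsTo L (sphere 0 1) (sphere 0 ρ)) : ∃ T : E →ₗᵢ[ℝ] F, ∀ x, L x = ρ • T x := by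
  have hnorm : ∀ x, ‖L x‖ = ρ * ‖x‖ := by
    intro x
    rcases eq_or_ne x 0 with rfl | hx
    · simp
    have hx' : ‖x‖⁻¹ • x ∈ sphere (0 : E) 1 := by simpa using norm_smul_inv_norm (𝕜 := ℝ) hx
    have := mem_sphere_zero_iff_norm.1 (h hx')
    rw [map_smul, norm_smul, norm_inv, norm_norm] at this
    field_simp at this
    linarith
  refine ⟨⟨ρ⁻¹ • L, fun x => ?_⟩, fun x => ?_⟩
  · simp [norm_smul, hnorm, abs_of_pos hρ, hρ.ne']
  · simp [smul_smul, hρ.ne']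

end LinearMap

theorem stmt_15_general (n : ℕ)
    (L : EuclideanSpace ℝ (Fin n) ≃ₗ[ℝ] EuclideanSpace ℝ (Fin n))
    (f : EuclideanSpace ℝ (Fin n) → EuclideanSpace ℝ (Fin n))
    (q : ℕ → EuclideanSpace ℝ (Fin n)) (r : ℕ → ℝ)
    (hconv : TendstoUniformlyOn (fun i x => (r i)⁻¹ • (f (q i + r i • x) - f (q i)))
      (fun x => L x) atTop (Metric.sphere 0 1))
    (hsph : ∀ i, ∃ (c : EuclideanSpace ℝ (Fin n)) (ρ : ℝ), ‖c‖ < ρ ∧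
      (fun x => (r i)⁻¹ • (f (q i + r i • x) - f (q i))) '' Metric.sphere 0 1 =
        Metric.sphere c ρ) :
    (∃ (c : EuclideanSpace ℝ (Fin n)) (ρ : ℝ), 0 < ρ ∧
      (fun x => L x) '' Metric.sphere 0 1 = Metric.sphere c ρ) ∧
    ∃ (lam : ℝ) (T : EuclideanSpace ℝ (Fin n) →ₗᵢ[ℝ] EuclideanSpace ℝ (Fin n)),
      0 < lam ∧ ∀ x, L x = lam • T x := by
  have hsphere : ∃ (c : EuclideanSpace ℝ (Fin n)) (ρ : ℝ), 0 < ρ ∧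
      (fun x => L x) '' Metric.sphere 0 1 = Metric.sphere c ρ := by
    rcases subsingleton_or_nontrivial (EuclideanSpace ℝ (Fin n)) with _ | _
    · exact ⟨0, 1, one_pos, by simp [sphere_eq_empty_of_subsingleton one_ne_zero]⟩
    choose c ρ hcρ hFK using hsph
    exact exists_image_eq_sphere_of_tendstoUniformlyOn (isCompact_sphere 0 1)
      L.toLinearMap.continuous_of_finiteDimensional.continuousOn
      ((sphere_nontrivial 0 one_pos).image L.injective) hconv hFK
      fun i => (norm_nonneg _).trans (hcρ i).le
  obtain ⟨c, ρ, hρ, himg⟩ := hsphere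
  have hmaps : MapsTo L (sphere 0 1) (sphere c ρ) := himg ▸ mapsTo_image _ _
  obtain rfl := L.toLinearMap.eq_zero_of_mapsTo_sphere L.surjective hmaps
  obtain ⟨T, hT⟩ := L.toLinearMap.exists_linearIsometry_of_mapsTo_sphere hρ hmaps
  exact ⟨⟨0, ρ, hρ, himg⟩, ρ, T, hρ, hT⟩

theorem stmt_15 (n : ℕ)
    (L : EuclideanSpace ℝ (Fin n) ≃ₗ[ℝ] EuclideanSpace ℝ (Fin n))
    (f : EuclideanSpace ℝ (Fin n) → EuclideanSpace ℝ (Fin n))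
    (q : ℕ → EuclideanSpace ℝ (Fin n)) (r : ℕ → ℝ) (hr : ∀ i, 0 < r i)
    (hconv : TendstoUniformlyOn (fun i x => (r i)⁻¹ • (f (q i + r i • x) - f (q i)))
      (fun x => L x) atTop (Metric.sphere 0 1))
    (hsph : ∀ i, ∃ (c : EuclideanSpace ℝ (Fin n)) (ρ : ℝ), ‖c‖ < ρ ∧
      (fun x => (r i)⁻¹ • (f (q i + r i • x) - f (q i))) '' Metric.sphere 0 1 =
        Metric.sphere c ρ) :
    (∃ (c : EuclideanSpace ℝ (Fin n)) (ρ : ℝ), 0 < ρ ∧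
      (fun x => L x) '' Metric.sphere 0 1 = Metric.sphere c ρ) ∧
    ∃ (lam : ℝ) (T : EuclideanSpace ℝ (Fin n) →ₗᵢ[ℝ] EuclideanSpace ℝ (Fin n)),
      0 < lam ∧ ∀ x, L x = lam • T x :=
  stmt_15_general n L f q r hconv hsph
end
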